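/- A standardized DFA ⟨Z_n,{a,b}⟩ is completely reachable if and only if either H₁ = Z_n, or no proper subgroup of (Z_n,+) containing H₁ is a-invariant, where H₁ is the subgroup generated by the difference set D₁. -/

import Mathlib

/-- Action of a letter: `true` is `b : q ↦ q+1`, `false` is `a`. -/
def act {n : ℕ} (a : ZMod n → ZMod n) (q : ZMod n) (c : Bool) : ZMod n :=
  if c then q + 1 else a q

/-- Action of a word on a state. -/
def wact {n : ℕ} (a : ZMod n → ZMod n) (w : List Bool) (q : ZMod n) : ZMod n :=
  w.foldl (act a) q

/-- Excluded set of a word. -/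
def excl {n : ℕ} (a : ZMod n → ZMod n) (w : List Bool) : Set (ZMod n) :=
  {q | ∀ p, wact a w p ≠ q}

/-- Duplicate set of a word. -/
def dupl {n : ℕ} (a : ZMod n → ZMod n) (w : List Bool) : Set (ZMod n) :=
  {p | ∃ q₁ q₂, q₁ ≠ q₂ ∧ wact a w q₁ = p ∧ wact a w q₂ = p}

/-- Complete reachability for a standardized binary DFA on `ZMod n`. -/
def CompletelyReachable {n : ℕ} (a : ZMod n → ZMod n) : Prop :=
  ∀ S : Set (ZMod n), S.Nonempty → ∃ w : List Bool, Set.range (wact a w) = S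

/-- Standardized DFA: `a` has defect 1 with excluded state `0`, and `0·a = dupl(a)`,
i.e. `a 0` has a second preimage `r ≠ 0`. -/
def Standardized {n : ℕ} (a : ZMod n → ZMod n) : Prop :=
  Set.range a = {(0 : ZMod n)}ᶜ ∧ ∃ r : ZMod n, r ≠ 0 ∧ a r = a 0

/-- Edge of the Rystsov graph: for some word of defect 1, `q` is the excluded state
and `p` the duplicate state. -/
def RysEdge {n : ℕ} (a : ZMod n → ZMod n) (q p : ZMod n) : Prop :=
  ∃ w : List Bool, excl a w = {q} ∧ dupl a w = {p}

/-- The difference set `D₁`. -/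
def D1 {n : ℕ} (a : ZMod n → ZMod n) : Set (ZMod n) :=
  {p | RysEdge a 0 p}

/-!
If `H` is an `a`-invariant subgroup, then `a⁻¹(H) = H`: otherwise `a` would map `|H| + 1` states
into `H \ {0}`, merging more than one pair. So the only set that `a` maps onto `Hᶜ` is `Hᶜ`
itself, and since `b` permutes the cosets of `H`, the image of a word is never the complement of a
coset; for proper `H` the set `Hᶜ` is unreachable.

Conversely, call `S` expandable if some word reaches all of `S` and merges two states into a point
of `S`; then `S` is the image of a strictly larger set, so if every nonempty proper set is
expandable, induction on `|Sᶜ|` gives complete reachability. The states `z` such that every set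
containing `z` but not `0` is expandable form a subgroup (translate by powers of `b`), which
contains `D₁` and is `a`-invariant (pull back along `a`, using `0·a ∈ D₁`). Under the hypothesis
it is everything, and translating makes every nonempty proper set expandable.
-/

open Set
open scoped Pointwise

variable {n : ℕ} {a : ZMod n → ZMod n}

theorem wact_nil (a : ZMod n → ZMod n) : wact a [] = id := rfl

theorem wact_singleton_false (a : ZMod n → ZMod n) : wact a [false] = a := rfl

theorem wact_singleton_true (a : ZMod n → ZMod n) : wact a [true] = (· + 1) := rfl

theorem wact_append (a : ZMod n → ZMod n) (w v : List Bool) (q : ZMod n) :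
    wact a (w ++ v) q = wact a v (wact a w q) :=
  List.foldl_append

theorem range_wact_append (a : ZMod n → ZMod n) (w v : List Bool) :
    range (wact a (w ++ v)) = wact a v '' range (wact a w) := by
  rw [← range_comp]
  exact congrArg range (funext (wact_append a w v))

theorem wact_replicate_true (a : ZMod n → ZMod n) (k : ℕ) :
    wact a (List.replicate k true) = (· + (k : ZMod n)) := by
  induction k with
  | zero => funext q; simp [wact]
  | succ k ih =>
    funext q
    rw [List.replicate_succ', wact_append, ih, wact_singleton_true]
    push_cast
    ring

theorem excl_eq_compl_range (a : ZMod n → ZMod n) (w : List Bool) :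
    excl a w = (range (wact a w))ᶜ := by
  ext
  simp [excl]

theorem image_wact_dupl_subset (a : ZMod n → ZMod n) (w v : List Bool) :
    wact a v '' dupl a w ⊆ dupl a (w ++ v) := by
  rintro _ ⟨p, ⟨x, y, hxy, hx, hy⟩, rfl⟩
  exact ⟨x, y, hxy, by rw [wact_append, hx], by rw [wact_append, hy]⟩

section DefectOne

variable {α : Type*} [Finite α] {f : α → α} {z r : α}

theorem injOn_compl_singleton_of_range_eq {r' : α} (hrange : range f = {z}ᶜ) (hrr' : r ≠ r')
    (hf : f r = f r') : InjOn f {r}ᶜ := by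
  have himage : f '' {r}ᶜ = range f := by
    refine (image_subset_range f _).antisymm ?_
    rintro _ ⟨x, rfl⟩
    by_cases hx : x = r
    · exact ⟨r', hrr'.symm, by rw [hx, hf]⟩
    · exact ⟨x, hx, rfl⟩
  refine injOn_of_ncard_image_eq ?_
  rw [himage, hrange, ncard_compl, ncard_compl, ncard_singleton, ncard_singleton]

theorem preimage_eq_of_mapsTo (hinj : InjOn f {r}ᶜ) (hz : z ∉ range f) {S : Set α}
    (hzS : z ∈ S) (hS : MapsTo f S S) : f ⁻¹' S = S := by
  refine Subset.antisymm (fun x hfx => ?_) hS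
  by_contra hx
  have hmaps : MapsTo f (insert x S \ {r}) (S \ {z}) := by
    rintro y ⟨hy, -⟩
    refine ⟨?_, fun hyz => hz ⟨y, hyz⟩⟩
    rcases hy with rfl | hy
    exacts [hfx, hS hy]
  have hle := ncard_le_ncard_of_injOn f hmaps (hinj.mono fun y hy => hy.2)
  have hge := pred_ncard_le_ncard_sdiff_singleton (insert x S) r
  rw [ncard_insert_of_notMem hx] at hge
  rw [ncard_sdiff_singleton_of_mem hzS] at hle
  have hpos : 0 < S.ncard := (ncard_pos (toFinite S)).mpr ⟨z, hzS⟩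
  omega

theorem eq_compl_of_image_eq_compl {S R : Set α} (hS : f ⁻¹' S = S) (hR : f '' R = Sᶜ) :
    R = Sᶜ := by
  have hsub : R ⊆ Sᶜ := by
    intro x hx hxS
    have hfx : f x ∈ Sᶜ := hR ▸ mem_image_of_mem f hx
    exact hfx (show x ∈ f ⁻¹' S by rwa [hS])
  exact eq_of_subset_of_ncard_le hsub (hR ▸ ncard_image_le)

end DefectOne

theorem AddSubmonoid.neg_mem_of_finite {G : Type*} [AddGroup G] [Finite G] (M : AddSubmonoid G)
    {x : G} (hx : x ∈ M) : -x ∈ M :=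
  AddSubmonoid.multiples_le.mpr hx <|
    (isOfFinAddOrder_of_finite x).mem_multiples_iff_mem_zmultiples.mpr
      (neg_mem (AddSubgroup.mem_zmultiples x))

namespace Standardized

theorem apply_ne_zero (hstd : Standardized a) (x : ZMod n) : a x ≠ 0 := by
  simpa [hstd.1] using mem_range_self (f := a) x

variable [NeZero n]

theorem exists_injOn_compl (hstd : Standardized a) : ∃ r, r ≠ 0 ∧ a r = a 0 ∧ InjOn a {r}ᶜ := by
  obtain ⟨hrange, r, hr0, hra⟩ := hstd
  exact ⟨r, hr0, hra, injOn_compl_singleton_of_range_eq hrange hr0 hra⟩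

theorem preimage_addSubgroup (hstd : Standardized a) {H : AddSubgroup (ZMod n)}
    (hH : ∀ h ∈ H, a h ∈ H) : a ⁻¹' H = H := by
  obtain ⟨r, -, -, hinj⟩ := hstd.exists_injOn_compl
  exact preimage_eq_of_mapsTo hinj (fun ⟨x, hx⟩ => hstd.apply_ne_zero x hx) H.zero_mem hH

theorem range_wact_ne_vadd_compl (hstd : Standardized a) {H : AddSubgroup (ZMod n)}
    (hH : ∀ h ∈ H, a h ∈ H) (w : List Bool) (g : ZMod n) :
    range (wact a w) ≠ g +ᵥ (H : Set (ZMod n))ᶜ := by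
  induction w using List.reverseRecOn generalizing g with
  | nil =>
    rw [wact_nil, range_id, vadd_set_compl]
    intro h
    exact (h ▸ mem_univ g : g ∈ (g +ᵥ (H : Set (ZMod n)))ᶜ) ⟨0, H.zero_mem, add_zero g⟩
  | append_singleton w c ih =>
    rw [range_wact_append]
    cases c
    · rw [wact_singleton_false]
      intro h
      have hg : g ∈ H := by
        by_contra hg
        have h0 : (0 : ZMod n) ∈ g +ᵥ (H : Set (ZMod n))ᶜ :=
          ⟨-g, by simpa using hg, add_neg_cancel g⟩
        rw [← h] at h0
        obtain ⟨x, -, hx⟩ := h0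
        exact hstd.apply_ne_zero x hx
      rw [vadd_set_compl, vadd_coe_set hg] at h
      refine ih 0 ?_
      rw [zero_vadd]
      exact eq_compl_of_image_eq_compl (hstd.preimage_addSubgroup hH) h
    · rw [wact_singleton_true]
      intro h
      have hshift : (· + 1) '' range (wact a w) = (1 : ZMod n) +ᵥ range (wact a w) := by
        rw [← image_vadd]
        simp only [vadd_eq_add, add_comm]
      apply ih (-1 + g)
      rw [← vadd_vadd, ← h, hshift, neg_vadd_vadd]

theorem apply_zero_mem_D1 (hstd : Standardized a) : a 0 ∈ D1 a := by
  obtain ⟨r, hr0, hra, hinj⟩ := hstd.exists_injOn_compl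
  refine ⟨[false], by rw [excl_eq_compl_range, wact_singleton_false, hstd.1, compl_compl], ?_⟩
  ext p
  constructor
  · rintro ⟨x, y, hxy, rfl, hy⟩
    rw [wact_singleton_false] at hy ⊢
    by_cases hx : x = r
    · rw [hx, hra]; rfl
    by_cases hyr : y = r
    · rw [← hy, hyr, hra]; rfl
    exact absurd (hinj hx hyr hy.symm) hxy
  · rintro rfl
    exact ⟨r, 0, hr0, hra, rfl⟩

end Standardized

def Expandable (a : ZMod n → ZMod n) (S : Set (ZMod n)) : Prop :=
  ∃ w, S ⊆ range (wact a w) ∧ (S ∩ dupl a w).Nonempty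

namespace Expandable

variable {S : Set (ZMod n)}

theorem image_wact (h : Expandable a S) (v : List Bool) : Expandable a (wact a v '' S) := by
  obtain ⟨w, hS, hdup⟩ := h
  refine ⟨w ++ v, by rw [range_wact_append]; exact image_mono hS, (hdup.image (wact a v)).mono ?_⟩
  exact (image_inter_subset _ _ _).trans (inter_subset_inter_right _ (image_wact_dupl_subset a w v))

theorem of_preimage_add [NeZero n] {t : ZMod n} (h : Expandable a ((· + t) ⁻¹' S)) :
    Expandable a S := by
  have := h.image_wact (List.replicate t.val true)
  rwa [wact_replicate_true, ZMod.natCast_zmod_val,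
    image_preimage_eq _ (add_right_surjective t)] at this

theorem of_preimage_apply (hS : S ⊆ range a) (h : Expandable a (a ⁻¹' S)) : Expandable a S := by
  simpa only [wact_singleton_false, image_preimage_eq_of_subset hS] using h.image_wact [false]

theorem of_mem_D1 {d : ZMod n} (hd : d ∈ D1 a) (hdS : d ∈ S) (h0S : 0 ∉ S) : Expandable a S := by
  obtain ⟨w, hexcl, hdupl⟩ := hd
  refine ⟨w, fun q hq => ?_, d, hdS, by rw [hdupl]; rfl⟩
  have hq' : q ∉ excl a w := by
    rw [hexcl]
    rintro rfl
    exact h0S hq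
  simpa [excl_eq_compl_range] using hq'

theorem exists_image_eq [NeZero n] (h : Expandable a S) :
    ∃ w T, S.ncard < T.ncard ∧ wact a w '' T = S := by
  obtain ⟨w, hS, p, hpS, x, y, hxy, hx, hy⟩ := h
  refine ⟨w, wact a w ⁻¹' S, ?_, image_preimage_eq_of_subset hS⟩
  have hninj : ¬ InjOn (wact a w) (wact a w ⁻¹' S) := fun hinj =>
    hxy (hinj (show wact a w x ∈ S by rw [hx]; exact hpS)
      (show wact a w y ∈ S by rw [hy]; exact hpS) (hx.trans hy.symm))
  calc S.ncard = (wact a w '' (wact a w ⁻¹' S)).ncard := by rw [image_preimage_eq_of_subset hS]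
    _ < _ := lt_of_le_of_ne ncard_image_le (mt (ncard_image_iff (toFinite _)).mp hninj)

end Expandable

theorem completelyReachable_of_expandable [NeZero n]
    (h : ∀ S : Set (ZMod n), S.Nonempty → S ≠ univ → Expandable a S) :
    CompletelyReachable a := by
  intro S hS
  induction hk : Sᶜ.ncard using Nat.strong_induction_on generalizing S with
  | _ k ih =>
  by_cases hU : S = univ
  · exact ⟨[], by rw [hU, wact_nil, range_id]⟩
  obtain ⟨v, T, hlt, rfl⟩ := (h S hS hU).exists_image_eq
  have hTc : Tᶜ.ncard < k := by
    have := ncard_add_ncard_compl T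
    have := ncard_add_ncard_compl (wact a v '' T)
    omega
  obtain ⟨w, hw⟩ := ih _ hTc T (nonempty_of_ncard_ne_zero (by omega)) rfl
  exact ⟨w ++ v, by rw [range_wact_append, hw]⟩

def expansionSubmonoid [NeZero n] (a : ZMod n → ZMod n) : AddSubmonoid (ZMod n) where
  carrier := {z | ∀ S : Set (ZMod n), 0 ∉ S → z ∈ S → Expandable a S}
  zero_mem' := fun _ h0 h => absurd h h0
  add_mem' := by
    intro z₁ z₂ h₁ h₂ S h0 hS
    by_cases hz₂ : z₂ ∈ S
    · exact h₂ S h0 hz₂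
    · exact Expandable.of_preimage_add (h₁ ((· + z₂) ⁻¹' S) (by simpa using hz₂) hS)

def expansionSubgroup [NeZero n] (a : ZMod n → ZMod n) : AddSubgroup (ZMod n) :=
  { expansionSubmonoid a with neg_mem' := (expansionSubmonoid a).neg_mem_of_finite }

section ExpansionSubgroup

variable [NeZero n]

theorem D1_subset_expansionSubgroup : D1 a ⊆ expansionSubgroup a :=
  fun _ hd _ h0 hdS => Expandable.of_mem_D1 hd hdS h0

theorem Standardized.apply_mem_expansionSubgroup (hstd : Standardized a) {z : ZMod n}
    (hz : z ∈ expansionSubgroup a) : a z ∈ expansionSubgroup a := by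
  intro S h0 haz
  by_cases hs : a 0 ∈ S
  · exact Expandable.of_mem_D1 hstd.apply_zero_mem_D1 hs h0
  · refine Expandable.of_preimage_apply ?_ (hz (a ⁻¹' S) hs haz)
    rw [hstd.1]
    rintro q hq rfl
    exact h0 hq

theorem completelyReachable_of_expansionSubgroup_eq_top (h : expansionSubgroup a = ⊤) :
    CompletelyReachable a := by
  refine completelyReachable_of_expandable fun S ⟨s, hs⟩ hS => ?_
  obtain ⟨c, hc⟩ := (ne_univ_iff_exists_notMem S).mp hS
  have hsc : s - c ∈ expansionSubgroup a := h ▸ AddSubgroup.mem_top (s - c)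
  exact Expandable.of_preimage_add (hsc ((· + c) ⁻¹' S) (by simpa using hc) (by simpa using hs))

end ExpansionSubgroup

theorem completely_reachable_iff_H1_version {n : ℕ} (hn : 2 ≤ n)
    (a : ZMod n → ZMod n) (hstd : Standardized a) :
    CompletelyReachable a ↔
      (AddSubgroup.closure (D1 a) = ⊤ ∨
        ∀ H : AddSubgroup (ZMod n),
          AddSubgroup.closure (D1 a) ≤ H → (∀ h ∈ H, a h ∈ H) → H = ⊤) := by
  have : NeZero n := ⟨by omega⟩
  constructor
  · intro hCR
    refine Or.inr fun H _ hH => ?_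
    by_contra hHtop
    obtain ⟨w, hw⟩ := hCR _ (nonempty_compl.mpr (mt AddSubgroup.coe_eq_univ.mp hHtop))
    exact hstd.range_wact_ne_vadd_compl hH w 0 (by rw [hw, zero_vadd])
  · intro h
    apply completelyReachable_of_expansionSubgroup_eq_top
    have hle : AddSubgroup.closure (D1 a) ≤ expansionSubgroup a :=
      (AddSubgroup.closure_le _).mpr D1_subset_expansionSubgroup
    rcases h with htop | hinv
    · exact top_le_iff.mp (htop ▸ hle)
    · exact hinv _ hle fun _ => hstd.apply_mem_expansionSubgroup
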